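/- The logical σ_Z distance of the 3-torus code (qubits on edges) in the direction-0 sector equals N²: the minimum cardinality of a 1-cocycle T of the N×N×N 3-torus lattice with |T ∩ L| odd, where L = {((t,0,0),0) : t ∈ ZMod N} is the straight loop, is exactly N²; in particular every such nontrivial cocycle has at least N² edges, and the plane P_0 attains this minimum. -/

import Mathlib

/-- The standard basis vector `eᵢ` of `(ZMod N)³` (vertices indexed by `Fin 3 → ZMod N`). -/
def basis3 (N : ℕ) (i : Fin 3) : Fin 3 → ZMod N := fun j => if j = i then 1 else 0

/-- The star of a vertex `v` of the `N × N × N` 3-torus lattice: the six edges incident to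
`v`, namely `(v, i)` and `(v - eᵢ, i)` for `i ∈ Fin 3`. -/
def star3 (N : ℕ) (v : Fin 3 → ZMod N) : Set ((Fin 3 → ZMod N) × Fin 3) :=
  {e | ∃ i : Fin 3, e = (v, i) ∨ e = (v - basis3 N i, i)}

/-- The boundary of a face `(v, k)` of the 3-torus lattice: the four edges
`(v, i)`, `(v, j)`, `(v + e_j, i)`, `(v + e_i, j)` where `{i, j} = {0,1,2} \ {k}`. -/
def faceBd3 (N : ℕ) (f : (Fin 3 → ZMod N) × Fin 3) : Set ((Fin 3 → ZMod N) × Fin 3) :=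
  {e | ∃ i : Fin 3, i ≠ f.2 ∧
      (e = (f.1, i) ∨ ∃ j : Fin 3, j ≠ f.2 ∧ j ≠ i ∧ e = (f.1 + basis3 N j, i))}

/-- `S` is a 1-cycle of the 3-torus lattice. -/
def isCycle3 (N : ℕ) (S : Set ((Fin 3 → ZMod N) × Fin 3)) : Prop :=
  ∀ v : Fin 3 → ZMod N, Even ((S ∩ star3 N v).ncard)

/-- `T` is a 1-cocycle of the 3-torus lattice. -/
def isCocycle3 (N : ℕ) (T : Set ((Fin 3 → ZMod N) × Fin 3)) : Prop :=
  ∀ f : (Fin 3 → ZMod N) × Fin 3, Even ((T ∩ faceBd3 N f).ncard)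

/-- The plane `P_x`: all direction-0 edges whose base point has first coordinate `x`;
a non-compressible 2-torus in the 3-torus. -/
def plane3 (N : ℕ) (x : ZMod N) : Set ((Fin 3 → ZMod N) × Fin 3) :=
  {e | ∃ y z : ZMod N, e = (![x, y, z], 0)}

/-- The straight loop `L = {((t,0,0), 0) : t ∈ ZMod N}`, a non-contractible loop. -/
def loop3 (N : ℕ) : Set ((Fin 3 → ZMod N) × Fin 3) :=
  {e | ∃ t : ZMod N, e = (![t, 0, 0], 0)}

/-- The coboundary of an edge `e`: all faces `f` with `e ∈ ∂f`. -/
def coface3 (N : ℕ) (e : (Fin 3 → ZMod N) × Fin 3) : Set ((Fin 3 → ZMod N) × Fin 3) :=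
  {f | e ∈ faceBd3 N f}

/-- The boundary of a cube `c`: the six faces `(c, k)` and `(c + e_k, k)` for `k ∈ Fin 3`. -/
def cubeBd3 (N : ℕ) (c : Fin 3 → ZMod N) : Set ((Fin 3 → ZMod N) × Fin 3) :=
  {f | ∃ k : Fin 3, f = (c, k) ∨ f = (c + basis3 N k, k)}

/-!
Summing the cocycle condition of a 1-cocycle `T` over the faces of the strip between two
neighbouring lines `{((t, y, z), 0) : t}` counts every transverse edge of the strip twice, so the
parity of `|T ∩ line|` is the same for all `N²` lines in direction `0`. If `T` meets the loop `L`
oddly it therefore meets each of these pairwise disjoint lines, and `|T| ≥ N²`. The plane `P_0`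
meets every line exactly once and is a cocycle, since each face meets it in zero or two edges.
-/

open Function Set

theorem Set.natCast_ncard_inter_range {α ι R : Type*} [Fintype ι] [AddCommMonoidWithOne R]
    (T : Set α) {g : ι → α} (hg : Injective g) :
    ((T ∩ range g).ncard : R) = ∑ i, T.indicator 1 (g i) := by
  classical
  have hpre : g ⁻¹' T = ↑(Finset.univ.filter fun i => g i ∈ T) := by ext; simp
  rw [← image_preimage_eq_inter_range, ncard_image_of_injective _ hg, hpre, ncard_coe_finset,
    Finset.natCast_card_filter]
  simp only [indicator_apply, Pi.one_apply]

section Torus3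

variable {N : ℕ}

lemma basis3_ne_zero [Nontrivial (ZMod N)] (i : Fin 3) : basis3 N i ≠ 0 := fun h => by
  simpa [basis3] using congrFun h i

lemma faceBd3_eq_range (v : Fin 3 → ZMod N) {i j k : Fin 3} (hik : i ≠ k) (hjk : j ≠ k)
    (hij : i ≠ j) :
    faceBd3 N (v, k) = range ![(v, i), (v, j), (v + basis3 N j, i), (v + basis3 N i, j)] := by
  ext e
  simp only [faceBd3, mem_ofPred_eq, mem_range, Fin.exists_fin_succ]
  fin_cases i <;> fin_cases j <;> fin_cases k <;> simp_all <;> aesop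

lemma injective_faceEdges [Nontrivial (ZMod N)] (v : Fin 3 → ZMod N) {i j : Fin 3}
    (hij : i ≠ j) :
    Injective ![(v, i), (v, j), (v + basis3 N j, i), (v + basis3 N i, j)] := by
  intro a b h
  fin_cases a <;> fin_cases b <;> simp_all [Prod.ext_iff, basis3_ne_zero, hij.symm]

lemma natCast_ncard_inter_faceBd3 [Nontrivial (ZMod N)] (T : Set ((Fin 3 → ZMod N) × Fin 3))
    (v : Fin 3 → ZMod N) {i j k : Fin 3} (hik : i ≠ k) (hjk : j ≠ k) (hij : i ≠ j) :
    ((T ∩ faceBd3 N (v, k)).ncard : ZMod 2) = T.indicator 1 (v, i) + T.indicator 1 (v, j) +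
      T.indicator 1 (v + basis3 N j, i) + T.indicator 1 (v + basis3 N i, j) := by
  rw [faceBd3_eq_range v hik hjk hij, natCast_ncard_inter_range T (injective_faceEdges v hij),
    Fin.sum_univ_four]
  rfl

lemma indicator_faceBd3_sum_eq_zero [Nontrivial (ZMod N)] {T : Set ((Fin 3 → ZMod N) × Fin 3)}
    (hT : isCocycle3 N T) (v : Fin 3 → ZMod N) {i j k : Fin 3} (hik : i ≠ k) (hjk : j ≠ k)
    (hij : i ≠ j) :
    (T.indicator 1 (v, i) + T.indicator 1 (v, j) + T.indicator 1 (v + basis3 N j, i) +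
      T.indicator 1 (v + basis3 N i, j) : ZMod 2) = 0 := by
  rw [← natCast_ncard_inter_faceBd3 T v hik hjk hij, ZMod.natCast_eq_zero_iff_even]
  exact hT (v, k)

lemma eq_apply_zero_of_periodic_basis3 [NeZero N] {β : Type*} {f : (Fin 3 → ZMod N) → β}
    (hf : ∀ i, Periodic f (basis3 N i)) (v : Fin 3 → ZMod N) : f v = f 0 := by
  have hv : v = ∑ i, v i • basis3 N i := by
    ext j
    simp [Finset.sum_apply, basis3]
  have hsmul : ∀ i, Periodic f (v i • basis3 N i) := fun i => by
    rw [← ZMod.natCast_zmod_val (v i), Nat.cast_smul_eq_nsmul]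
    exact (hf i).nsmul _
  rw [hv]
  exact Periodic.eq (Finset.sum_induction _ (Periodic f) (fun _ _ => Periodic.add_period)
    (periodic_with_period_zero f) fun i _ => hsmul i)

def xLine (N : ℕ) (v : Fin 3 → ZMod N) (t : ZMod N) : (Fin 3 → ZMod N) × Fin 3 :=
  (v + t • basis3 N 0, 0)

lemma xLine_injective (v : Fin 3 → ZMod N) : Injective (xLine N v) := fun a b h => by
  simpa [xLine, basis3] using congrFun (congrArg Prod.fst h) 0

lemma loop3_eq_range_xLine : loop3 N = range (xLine N 0) := by
  have hvec : ∀ t : ZMod N, t • basis3 N 0 = ![t, 0, 0] := fun t => by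
    ext i; fin_cases i <;> simp [basis3]
  ext e
  simp [loop3, xLine, hvec, eq_comm]

section LineParity

variable [NeZero N] {T : Set ((Fin 3 → ZMod N) × Fin 3)}

noncomputable def lineParity (T : Set ((Fin 3 → ZMod N) × Fin 3)) (v : Fin 3 → ZMod N) :
    ZMod 2 :=
  ∑ t, T.indicator 1 (xLine N v t)

lemma lineParity_eq_natCast_ncard (T : Set ((Fin 3 → ZMod N) × Fin 3)) (v : Fin 3 → ZMod N) :
    lineParity T v = ((T ∩ range (xLine N v)).ncard : ZMod 2) :=
  (natCast_ncard_inter_range T (xLine_injective v)).symm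

lemma lineParity_periodic_basis3_zero (T : Set ((Fin 3 → ZMod N) × Fin 3)) :
    Periodic (lineParity T) (basis3 N 0) := fun v => by
  have hshift : ∀ t, xLine N (v + basis3 N 0) t = xLine N v (t + 1) := fun t => by
    simp only [xLine, add_smul, one_smul]; abel_nf
  simp only [lineParity, hshift]
  exact Equiv.sum_comp (Equiv.addRight (1 : ZMod N)) fun t => T.indicator 1 (xLine N v t)

lemma lineParity_periodic_basis3 [Nontrivial (ZMod N)] (hT : isCocycle3 N T) {j : Fin 3}
    (hj : j ≠ 0) : Periodic (lineParity T) (basis3 N j) := fun v => by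
  obtain ⟨k, hk0, hkj⟩ : ∃ k : Fin 3, k ≠ 0 ∧ k ≠ j := by fin_cases j <;> decide
  set rung : ZMod N → ZMod 2 := fun t => T.indicator 1 (v + t • basis3 N 0, j)
  have hface : ∀ t, T.indicator 1 (xLine N v t) + rung t +
      T.indicator 1 (xLine N (v + basis3 N j) t) + rung (t + 1) = 0 := fun t => by
    have hnext : v + t • basis3 N 0 + basis3 N 0 = v + (t + 1) • basis3 N 0 := by
      rw [add_smul, one_smul, add_assoc]
    have h := indicator_faceBd3_sum_eq_zero hT (v + t • basis3 N 0) hk0.symm hkj.symm hj.symm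
    rwa [add_right_comm v (t • basis3 N 0) (basis3 N j), hnext] at h
  have hrung : ∑ t, rung (t + 1) = ∑ t, rung t :=
    Equiv.sum_comp (Equiv.addRight (1 : ZMod N)) rung
  have hsum := Finset.sum_eq_zero (s := Finset.univ) fun t _ => hface t
  simp only [Finset.sum_add_distrib, hrung] at hsum
  unfold lineParity
  grind

lemma lineParity_eq_one [Nontrivial (ZMod N)] (hT : isCocycle3 N T)
    (hodd : Odd ((T ∩ loop3 N).ncard)) (v : Fin 3 → ZMod N) : lineParity T v = 1 := by
  have hper : ∀ i, Periodic (lineParity T) (basis3 N i) := fun i => by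
    rcases eq_or_ne i 0 with rfl | hi
    · exact lineParity_periodic_basis3_zero T
    · exact lineParity_periodic_basis3 hT hi
  rw [eq_apply_zero_of_periodic_basis3 hper, lineParity_eq_natCast_ncard, ← loop3_eq_range_xLine,
    ZMod.natCast_eq_one_iff_odd]
  exact hodd

theorem sq_le_ncard_of_isCocycle3 [Nontrivial (ZMod N)] (hT : isCocycle3 N T)
    (hodd : Odd ((T ∩ loop3 N).ncard)) : N ^ 2 ≤ T.ncard := by
  have hmeet : ∀ v, (T ∩ range (xLine N v)).Nonempty := fun v =>
    nonempty_of_ncard_ne_zero fun h => by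
      simpa [lineParity_eq_natCast_ncard, h] using lineParity_eq_one hT hodd v
  have hsurj : (fun e : (Fin 3 → ZMod N) × Fin 3 => (e.1 1, e.1 2)) '' T = univ := by
    refine eq_univ_of_forall fun p => ?_
    obtain ⟨e, heT, t, rfl⟩ := hmeet ![0, p.1, p.2]
    exact ⟨_, heT, by simp only [xLine, Pi.add_apply, Pi.smul_apply, basis3]; simp⟩
  calc N ^ 2 = (univ : Set (ZMod N × ZMod N)).ncard := by simp [sq]
    _ ≤ T.ncard := hsurj ▸ ncard_image_le T.toFinite

end LineParity

lemma mem_plane3 (x : ZMod N) (u : Fin 3 → ZMod N) (d : Fin 3) :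
    (u, d) ∈ plane3 N x ↔ d = 0 ∧ u 0 = x := by
  constructor
  · rintro ⟨y, z, h⟩
    simp only [Prod.mk.injEq] at h
    exact ⟨h.2, by simp [h.1]⟩
  · rintro ⟨rfl, rfl⟩
    exact ⟨u 1, u 2, Prod.ext (by ext i; fin_cases i <;> rfl) rfl⟩

theorem isCocycle3_plane3 [Nontrivial (ZMod N)] (x : ZMod N) : isCocycle3 N (plane3 N x) := by
  rintro ⟨v, k⟩
  obtain ⟨i, j, hik, hjk, hij, hj0⟩ : ∃ i j : Fin 3, i ≠ k ∧ j ≠ k ∧ i ≠ j ∧ j ≠ 0 := by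
    fin_cases k <;> decide
  have hoff : ∀ u {d}, d ≠ 0 →
      (plane3 N x).indicator (1 : (Fin 3 → ZMod N) × Fin 3 → ZMod 2) (u, d) = 0 :=
    fun u d hd => indicator_of_notMem (by simp [mem_plane3, hd]) _
  rw [← ZMod.natCast_eq_zero_iff_even, natCast_ncard_inter_faceBd3 _ v hik hjk hij, hoff _ hj0,
    hoff _ hj0]
  rcases eq_or_ne i 0 with rfl | hi
  · have hmem : (v + basis3 N j, 0) ∈ plane3 N x ↔ (v, 0) ∈ plane3 N x := by
      simp [mem_plane3, basis3, hj0.symm]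
    by_cases hv : (v, 0) ∈ plane3 N x
    · rw [indicator_of_mem hv, indicator_of_mem (hmem.mpr hv)]
      simp only [Pi.one_apply, add_zero, CharTwo.add_self_eq_zero]
    · rw [indicator_of_notMem hv, indicator_of_notMem (mt hmem.mp hv)]; decide
  · rw [hoff _ hi, hoff _ hi]; decide

lemma ncard_plane3 (x : ZMod N) : (plane3 N x).ncard = N ^ 2 := by
  have hrange : plane3 N x =
      range fun p : ZMod N × ZMod N => ((![x, p.1, p.2] : Fin 3 → ZMod N), (0 : Fin 3)) := by
    ext e; simp [plane3, eq_comm]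
  rw [hrange, ncard_range_of_injective]
  · simp [sq]
  · intro p q h
    simpa using congrArg (fun e => (e.1 1, e.1 2)) h

lemma ncard_plane3_inter_loop3 : (plane3 N 0 ∩ loop3 N).ncard = 1 := by
  rw [ncard_eq_one]
  refine ⟨(0, 0), ?_⟩
  ext ⟨u, d⟩
  simp only [mem_inter_iff, mem_plane3, loop3, mem_ofPred_eq, Prod.mk.injEq, mem_singleton_iff]
  constructor
  · rintro ⟨⟨rfl, hu⟩, ⟨t, rfl, -⟩⟩
    refine ⟨?_, rfl⟩
    ext i; fin_cases i <;> simp_all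
  · rintro ⟨rfl, rfl⟩
    exact ⟨⟨rfl, rfl⟩, 0, by ext i; fin_cases i <;> rfl, rfl⟩

end Torus3

/-- The logical σ_Z distance of the 3-torus code (qubits on edges) in the direction-0
sector equals `N²`: the least cardinality of a 1-cocycle meeting the straight loop `L`
an odd number of times is `N²`, and the plane `P 0` attains this minimum. -/
theorem torus3_sigmaZ_distance (N : ℕ) (hN : 2 ≤ N) :
    IsLeast {k : ℕ | ∃ T : Set ((Fin 3 → ZMod N) × Fin 3),
        isCocycle3 N T ∧ Odd ((T ∩ loop3 N).ncard) ∧ T.ncard = k} (N ^ 2) ∧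
    isCocycle3 N (plane3 N 0) ∧ Odd ((plane3 N 0 ∩ loop3 N).ncard) ∧
    (plane3 N 0).ncard = N ^ 2 := by
  have : NeZero N := NeZero.of_gt hN
  have : Fact (1 < N) := ⟨hN⟩
  have hcocycle := isCocycle3_plane3 (N := N) 0
  have hodd : Odd ((plane3 N 0 ∩ loop3 N).ncard) := by
    rw [ncard_plane3_inter_loop3]
    exact odd_one
  refine ⟨⟨⟨plane3 N 0, hcocycle, hodd, ncard_plane3 0⟩, ?_⟩, hcocycle, hodd, ncard_plane3 0⟩
  rintro _ ⟨T, hT, hTodd, rfl⟩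
  exact sq_le_ncard_of_isCocycle3 hT hTodd
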